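/- Let P be the path graph on vertices v₁, ..., vₙ and f : V(P) → ℤ_{≥0} a map satisfying at least one of: (i) f(v₁) = 0 or f(vₙ) = 0; (ii) (f(v₁), f(v₂)) = (1,0) or (f(v_{n-1}), f(vₙ)) = (0,1); (iii) there exists k with (f(v_k), f(v_{k+1})) = (0,0); (iv) there exists k with (f(v_k), f(v_{k+1}), f(v_{k+2})) = (1,0,1). Then λ₂(L_{CP^f}) < 1. -/

import Mathlib

noncomputable def lap {V : Type*} [Fintype V] [DecidableEq V] (w : V → V → ℝ) :
    Matrix V V ℝ :=
  Matrix.of fun i j => if i = j then (∑ k, w k i) - w i i else - w j i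

/-- The `j`-th smallest (0-indexed) real part among the eigenvalues of `M`
(counted with multiplicity); `lamRe M 1` is Re(λ₂). -/
noncomputable def lamRe {ι : Type*} [Fintype ι] [DecidableEq ι] (M : Matrix ι ι ℝ)
    (j : ℕ) : ℝ :=
  (((M.map (fun x : ℝ => (x : ℂ))).charpoly.roots.map Complex.re).sort (· ≤ ·)).getD j 0

/-- Adjacency weights of the path graph v₁ ↔ v₂ ↔ ⋯ ↔ vₙ (vertices `Fin n`). -/
def pathW (n : ℕ) : Fin n → Fin n → ℝ :=
  fun i j => if i.1 + 1 = j.1 ∨ j.1 + 1 = i.1 then 1 else 0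

/-- Weights of the cone of a weighted digraph: an extra node `none` with an edge of
weight `f v` to every original node `v`. -/
def coneW {V : Type*} (w : V → V → ℝ) (f : V → ℝ) : Option V → Option V → ℝ
  | none, some v => f v
  | some u, some v => w u v
  | _, _ => 0

open Matrix Polynomial Finset

/-- cast of `f` to `ℕ → ℝ`. -/
noncomputable def Ff (n : ℕ) (f : Fin n → ℕ) (m : ℕ) : ℝ :=
  if h : m < n then (f ⟨m, h⟩ : ℝ) else 0

/-- degree of vertex `m` in the path. -/
noncomputable def Dd (n m : ℕ) : ℝ :=
  (if 0 < m then (1:ℝ) else 0) + (if m + 1 < n then (1:ℝ) else 0)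

lemma Ff_eq (n : ℕ) (f : Fin n → ℕ) (m : ℕ) (h : m < n) : Ff n f m = (f ⟨m, h⟩ : ℝ) := by
  unfold Ff; rw [dif_pos h]

lemma Ff_nonneg (n : ℕ) (f : Fin n → ℕ) (m : ℕ) : 0 ≤ Ff n f m := by
  unfold Ff; split <;> positivity

/-- the principal submatrix of the cone Laplacian obtained by deleting `none`. -/
noncomputable def Tm (n : ℕ) (f : Fin n → ℕ) : Matrix (Fin n) (Fin n) ℝ :=
  (lap (coneW (pathW n) (fun v => (f v : ℝ)))).submatrix some some

lemma sum_pathW (n : ℕ) (j : Fin n) (g : ℕ → ℝ) :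
    ∑ i : Fin n, pathW n i j * g i.1 =
      (if 0 < j.1 then g (j.1 - 1) else 0) + (if j.1 + 1 < n then g (j.1 + 1) else 0) := by
  have hterm : ∀ i : Fin n, pathW n i j * g i.1 =
      (if i.1 + 1 = j.1 then g i.1 else 0) + (if j.1 + 1 = i.1 then g i.1 else 0) := by
    intro i
    unfold pathW
    by_cases h1 : i.1 + 1 = j.1
    · rw [if_pos (Or.inl h1), if_pos h1, if_neg (by omega), one_mul, add_zero]
    · by_cases h2 : j.1 + 1 = i.1
      · rw [if_pos (Or.inr h2), if_neg h1, if_pos h2, one_mul, zero_add]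
      · rw [if_neg (by tauto), if_neg h1, if_neg h2, zero_mul, add_zero]
  rw [Finset.sum_congr rfl (fun i _ => hterm i), Finset.sum_add_distrib]
  congr 1
  · by_cases hj : 0 < j.1
    · have hb : j.1 - 1 < n := by omega
      rw [Finset.sum_congr rfl (fun i _ => show (if i.1 + 1 = j.1 then g i.1 else 0)
          = if i = ⟨j.1 - 1, hb⟩ then g i.1 else 0 from
          if_congr (by rw [Fin.ext_iff]; constructor <;> (intro h; simp at h ⊢; omega)) rfl rfl),
        Finset.sum_ite_eq' univ (⟨j.1 - 1, hb⟩ : Fin n) (fun i => g i.1)]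
      simp [hj]
    · rw [if_neg hj, Finset.sum_eq_zero]
      intro i _
      rw [if_neg (by omega)]
  · by_cases hj : j.1 + 1 < n
    · rw [Finset.sum_congr rfl (fun i _ => show (if j.1 + 1 = i.1 then g i.1 else 0)
          = if i = ⟨j.1 + 1, hj⟩ then g i.1 else 0 from
          if_congr (by rw [Fin.ext_iff]; constructor <;> (intro h; simp at h ⊢; omega)) rfl rfl),
        Finset.sum_ite_eq' univ (⟨j.1 + 1, hj⟩ : Fin n) (fun i => g i.1)]
      simp [hj]
    · rw [if_neg hj, Finset.sum_eq_zero]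
      intro i _
      rw [if_neg (by have := i.2; omega)]

lemma Tm_apply (n : ℕ) (f : Fin n → ℕ) (i j : Fin n) :
    Tm n f i j = (if i = j then Ff n f i.1 + Dd n i.1 else 0) - pathW n j i := by
  have hFf : Ff n f i.1 = (f i : ℝ) := by simp [Ff]
  rcases eq_or_ne i j with h | h
  · subst h
    show lap (coneW (pathW n) (fun v => (f v : ℝ))) (some i) (some i) = _
    rw [lap, Matrix.of_apply, if_pos rfl, if_pos rfl]
    have hsum : ∑ k : Option (Fin n), coneW (pathW n) (fun v => (f v : ℝ)) k (some i)
        = (f i : ℝ) + ∑ k : Fin n, pathW n k i := by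
      rw [Fintype.sum_option]; rfl
    have hdeg : ∑ k : Fin n, pathW n k i = Dd n i.1 := by
      have := sum_pathW n i (fun _ => 1)
      simpa [Dd, mul_one] using this
    rw [hsum, hdeg]
    show (f i : ℝ) + Dd n i.1 - pathW n i i = _
    rw [hFf]
  · show lap (coneW (pathW n) (fun v => (f v : ℝ))) (some i) (some j) = _
    rw [lap, Matrix.of_apply, if_neg (by simpa using h), if_neg h]
    show -pathW n j i = 0 - pathW n j i
    ring

/-- value of the shifted quadratic form at `m`. -/
noncomputable def qd (n : ℕ) (f : Fin n → ℕ) (g : ℕ → ℝ) (m : ℕ) : ℝ :=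
  g m * ((Ff n f m + Dd n m - 1) * g m -
    ((if 0 < m then g (m - 1) else 0) + (if m + 1 < n then g (m + 1) else 0)))

lemma quad (n : ℕ) (f : Fin n → ℕ) (g : ℕ → ℝ) :
    (fun i : Fin n => g i.1) ⬝ᵥ (Tm n f *ᵥ fun i : Fin n => g i.1) -
      (fun i : Fin n => g i.1) ⬝ᵥ (fun i : Fin n => g i.1) =
    ∑ m ∈ Finset.range n, qd n f g m := by
  have hmv : ∀ j : Fin n, (Tm n f *ᵥ fun i : Fin n => g i.1) j
      = (Ff n f j.1 + Dd n j.1) * g j.1 -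
        ((if 0 < j.1 then g (j.1 - 1) else 0) + (if j.1 + 1 < n then g (j.1 + 1) else 0)) := by
    intro j
    show ∑ i : Fin n, Tm n f j i * g i.1 = _
    have : ∀ i : Fin n, Tm n f j i * g i.1 =
        (if j = i then (Ff n f j.1 + Dd n j.1) * g i.1 else 0) - pathW n i j * g i.1 := by
      intro i
      rw [Tm_apply]
      rcases eq_or_ne j i with h | h
      · rw [if_pos h, if_pos h]; ring
      · rw [if_neg h, if_neg h]; ring
    rw [Finset.sum_congr rfl (fun i _ => this i), Finset.sum_sub_distrib,
      Finset.sum_ite_eq univ j (fun i => (Ff n f j.1 + Dd n j.1) * g i.1),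
      sum_pathW n j g]
    simp
  have hdot : (fun i : Fin n => g i.1) ⬝ᵥ (Tm n f *ᵥ fun i : Fin n => g i.1) -
      (fun i : Fin n => g i.1) ⬝ᵥ (fun i : Fin n => g i.1) = ∑ j : Fin n, qd n f g j.1 := by
    rw [dotProduct, dotProduct, ← Finset.sum_sub_distrib]
    refine Finset.sum_congr rfl fun j _ => ?_
    rw [hmv j]
    unfold qd
    ring
  rw [hdot, Fin.sum_univ_eq_sum_range (fun m => qd n f g m)]

lemma window (n : ℕ) (f : Fin n → ℕ) (g : ℕ → ℝ) (s : Finset ℕ) (hs : ∀ m ∈ s, m < n)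
    (h0 : ∀ m, m < n → m ∉ s → g m = 0) :
    ∑ m ∈ Finset.range n, qd n f g m = ∑ m ∈ s, qd n f g m := by
  refine (Finset.sum_subset (fun m hm => Finset.mem_range.2 (hs m hm)) ?_).symm
  intro m hm hns
  unfold qd
  rw [h0 m (Finset.mem_range.1 hm) hns, zero_mul]

lemma of_window (n : ℕ) (f : Fin n → ℕ) (g : ℕ → ℝ) (s : Finset ℕ) (hs : ∀ m ∈ s, m < n)
    (h0 : ∀ m, m < n → m ∉ s → g m = 0) (hneg : ∑ m ∈ s, qd n f g m < 0) :
    ∃ x : Fin n → ℝ, x ⬝ᵥ (Tm n f *ᵥ x) < x ⬝ᵥ x := by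
  refine ⟨fun i => g i.1, ?_⟩
  have h := quad n f g
  rw [window n f g s hs h0] at h
  linarith

-- sorted-list lemma
lemma getD_one_lt {s : Multiset ℝ} {a b : ℝ} (hab : ({a, b} : Multiset ℝ) ≤ s)
    (ha : a < 1) (hb : b < 1) : (s.sort (· ≤ ·)).getD 1 0 < 1 := by
  classical
  have hcard : 2 ≤ Multiset.card s := by
    have := Multiset.card_le_card hab
    simpa using this
  have hfilter : 2 ≤ Multiset.card (s.filter (· < 1)) := by
    have h1 : ({a, b} : Multiset ℝ).filter (· < 1) = {a, b} := by
      rw [Multiset.filter_eq_self]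
      intro x hx
      rcases Multiset.mem_cons.1 hx with h | h
      · simpa [h] using ha
      · simpa [Multiset.mem_singleton.1 h] using hb
    have := Multiset.card_le_card (Multiset.filter_le_filter (· < 1) hab)
    rw [h1] at this
    simpa using this
  have hsorted := s.pairwise_sort (· ≤ ·)
  have hlen : (s.sort (· ≤ ·)).length = Multiset.card s := s.length_sort _
  have hseq : (↑(s.sort (· ≤ ·)) : Multiset ℝ) = s := s.sort_eq _
  by_contra hcon
  push_neg at hcon
  obtain ⟨l0, l1, t, hl⟩ : ∃ l0 l1 t, s.sort (· ≤ ·) = l0 :: l1 :: t := by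
    rcases h : s.sort (· ≤ ·) with _ | ⟨l0, _ | ⟨l1, t⟩⟩
    · rw [h] at hlen; simp at hlen; omega
    · rw [h] at hlen; simp at hlen; omega
    · exact ⟨l0, l1, _, rfl⟩
  rw [hl] at hcon hsorted hseq
  simp only [List.getD_cons_succ, List.getD_cons_zero] at hcon
  -- every element of l1 :: t is ≥ 1
  have hge : ∀ r ∈ (l1 :: t : List ℝ), ¬ (r < 1) := by
    intro r hr
    rcases List.mem_cons.1 hr with h | h
    · subst h; linarith
    · have : l1 ≤ r := (List.pairwise_cons.1 ((List.pairwise_cons.1 hsorted).2)).1 r h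
      linarith
  have : Multiset.card (s.filter (· < 1)) ≤ 1 := by
    rw [← hseq]
    rw [show ((l0 :: l1 :: t : List ℝ) : Multiset ℝ) = l0 ::ₘ ((l1 :: t : List ℝ) : Multiset ℝ)
      from rfl]
    rw [Multiset.filter_cons, Multiset.filter_eq_nil.2 hge]
    by_cases h0 : (l0 : ℝ) < 1 <;> simp [h0]
  omega

lemma lam2_lt_one (n : ℕ) (f : Fin n → ℕ) (x : Fin n → ℝ)
    (hx : x ⬝ᵥ (Tm n f *ᵥ x) < x ⬝ᵥ x) :
    lamRe (lap (coneW (pathW n) (fun v => (f v : ℝ)))) 1 < 1 := by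
  classical
  set L := lap (coneW (pathW n) (fun v => (f v : ℝ))) with hL
  -- symmetry of Tm
  have hTsym : (Tm n f).IsHermitian := by
    rw [Matrix.IsHermitian]
    ext i j
    show Tm n f j i = Tm n f i j
    rcases eq_or_ne i j with h | h
    · rw [h]
    · show L (some j) (some i) = L (some i) (some j)
      rw [hL, lap, Matrix.of_apply, Matrix.of_apply, if_neg (by simpa using h.symm),
        if_neg (by simpa using h)]
      show -(pathW n i j) = -(pathW n j i)
      unfold pathW
      exact congrArg (fun z => -z) (if_congr or_comm rfl rfl)
  set Dm := Tm n f - 1 with hDm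
  have hDsym : Dm.IsHermitian := hTsym.sub Matrix.isHermitian_one
  have hns : ¬ Dm.PosSemidef := by
    intro hPSD
    have h2 := hPSD.dotProduct_mulVec_nonneg x
    have hstar : star x = x := by funext i; simp
    rw [hstar, hDm, Matrix.sub_mulVec, Matrix.one_mulVec, dotProduct_sub] at h2
    linarith
  have hev : ∃ i : Fin n, hDsym.eigenvalues i < 0 := by
    by_contra hc
    push_neg at hc
    exact hns (hDsym.posSemidef_iff_eigenvalues_nonneg.mpr hc)
  obtain ⟨i, hi⟩ := hev
  set ν := hDsym.eigenvalues i with hν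
  set v : Fin n → ℝ := ⇑(hDsym.eigenvectorBasis i) with hv
  have hv0 : v ≠ 0 := by
    intro h
    apply (hDsym.eigenvectorBasis).toBasis.ne_zero i
    rw [OrthonormalBasis.coe_toBasis]
    ext t
    exact congrFun h t
  have hmul : Dm *ᵥ v = ν • v := hDsym.mulVec_eigenvectorBasis i
  set μ := ν + 1 with hμ
  have hμ1 : μ < 1 := by rw [hμ]; linarith
  have hTv : Tm n f *ᵥ v = μ • v := by
    have : (Tm n f - 1) *ᵥ v = ν • v := hmul
    rw [Matrix.sub_mulVec, Matrix.one_mulVec, sub_eq_iff_eq_add] at this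
    rw [this, hμ, add_smul, one_smul]
  -- μ is a root of the charpoly of Tm
  have hroot : (Tm n f).charpoly.IsRoot μ := by
    have hNv : (μ • (1 : Matrix (Fin n) (Fin n) ℝ) - Tm n f) *ᵥ v = 0 := by
      rw [Matrix.sub_mulVec, Matrix.smul_mulVec, Matrix.one_mulVec, hTv, sub_self]
    have hdet : (μ • (1 : Matrix (Fin n) (Fin n) ℝ) - Tm n f).det = 0 :=
      (Matrix.exists_mulVec_eq_zero_iff).1 ⟨v, hv0, hNv⟩
    show ((Tm n f).charpoly).eval μ = 0
    rw [Matrix.charpoly, ← Polynomial.coe_evalRingHom, RingHom.map_det]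
    have : (Polynomial.evalRingHom μ).mapMatrix (Matrix.charmatrix (Tm n f))
        = μ • (1 : Matrix (Fin n) (Fin n) ℝ) - Tm n f := by
      ext a b
      rcases eq_or_ne a b with h | h
      · subst h
        simp [Matrix.charmatrix_apply_eq]
      · simp [Matrix.charmatrix_apply_ne _ _ _ h, Matrix.one_apply_ne h]
    rw [this, hdet]
  -- charpoly of L factors
  have hfact : L.charpoly = (Tm n f).charpoly * X := by
    have he : (Matrix.reindex ((Equiv.optionEquivSumPUnit.{0,0} (Fin n)))
        ((Equiv.optionEquivSumPUnit.{0,0} (Fin n))) L)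
        = Matrix.fromBlocks (Tm n f) (Matrix.of fun i (_ : Unit) => -((f i : ℝ))) 0 0 := by
      ext a b
      rcases a with a | a <;> rcases b with b | b
      · show L (some a) (some b) = Tm n f a b
        rfl
      · show L (some a) none = -((f a : ℝ))
        rw [hL, lap, Matrix.of_apply, if_neg (by simp)]
        rfl
      · show L none (some b) = 0
        rw [hL, lap, Matrix.of_apply, if_neg (by simp)]
        show -(coneW (pathW n) (fun v => (f v : ℝ)) (some b) none) = 0
        simp [coneW]
      · show L none none = 0
        rw [hL, lap, Matrix.of_apply, if_pos rfl]
        have h1 : ∑ k : Option (Fin n), coneW (pathW n) (fun v => (f v : ℝ)) k none = 0 := by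
          apply Finset.sum_eq_zero
          intro k _
          cases k <;> rfl
        rw [h1]
        show (0:ℝ) - coneW (pathW n) (fun v => (f v : ℝ)) none none = 0
        simp [coneW]
    have h0 : ((0 : Matrix Unit Unit ℝ)).charpoly = X := by
      rw [Matrix.charpoly, Matrix.det_unique, Matrix.charmatrix_apply_eq]
      simp
    calc L.charpoly = (Matrix.reindex ((Equiv.optionEquivSumPUnit.{0,0} (Fin n)))
          ((Equiv.optionEquivSumPUnit.{0,0} (Fin n))) L).charpoly :=
        (Matrix.charpoly_reindex _ _).symm
      _ = (Matrix.fromBlocks (Tm n f) (Matrix.of fun i (_ : Unit) => -((f i : ℝ))) 0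
          (0 : Matrix Unit Unit ℝ)).charpoly := by rw [he]
      _ = (Tm n f).charpoly * ((0 : Matrix Unit Unit ℝ)).charpoly :=
        Matrix.charpoly_fromBlocks_zero₂₁ _ _ _
      _ = (Tm n f).charpoly * X := by rw [h0]
  -- pass to ℂ
  have hmapL : L.map (fun x : ℝ => (x : ℂ)) = L.map (Complex.ofRealHom : ℝ →+* ℂ) := rfl
  have hcp : (L.map (fun x : ℝ => (x : ℂ))).charpoly
      = ((Tm n f).charpoly.map (Complex.ofRealHom : ℝ →+* ℂ)) * X := by
    rw [hmapL, Matrix.charpoly_map, hfact, Polynomial.map_mul, Polynomial.map_X]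
  have hp0 : ((Tm n f).charpoly.map (Complex.ofRealHom : ℝ →+* ℂ)) ≠ 0 :=
    (((Tm n f).charpoly_monic).map _).ne_zero
  have hroots : (L.map (fun x : ℝ => (x : ℂ))).charpoly.roots
      = ((Tm n f).charpoly.map (Complex.ofRealHom : ℝ →+* ℂ)).roots + {0} := by
    rw [hcp, Polynomial.roots_mul (mul_ne_zero hp0 Polynomial.X_ne_zero), Polynomial.roots_X]
  have hmem : (μ : ℂ) ∈ ((Tm n f).charpoly.map (Complex.ofRealHom : ℝ →+* ℂ)).roots := by
    rw [Polynomial.mem_roots hp0]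
    exact hroot.map
  -- conclude
  show (((L.map (fun x : ℝ => (x : ℂ))).charpoly.roots.map Complex.re).sort (· ≤ ·)).getD 1 0 < 1
  apply getD_one_lt (a := μ) (b := 0) _ hμ1 (by norm_num)
  rw [hroots, Multiset.map_add]
  have h1 : ({μ} : Multiset ℝ) ≤
      ((Tm n f).charpoly.map (Complex.ofRealHom : ℝ →+* ℂ)).roots.map Complex.re := by
    rw [Multiset.singleton_le]
    have := Multiset.mem_map_of_mem Complex.re hmem
    simpa using this
  have h2 : ({0} : Multiset ℝ) ≤ ({(0:ℂ)} : Multiset ℂ).map Complex.re := by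
    simp
  have : ({μ, 0} : Multiset ℝ) = {μ} + {0} := rfl
  rw [this]
  exact add_le_add h1 h2

lemma caseA (n : ℕ) (hn : 0 < n) (f : Fin n → ℕ) (hf0 : f ⟨0, hn⟩ = 0) :
    ∃ x : Fin n → ℝ, x ⬝ᵥ (Tm n f *ᵥ x) < x ⬝ᵥ x := by
  by_cases hn2 : 1 < n
  · -- n ≥ 2
    set c : ℝ := Ff n f 1 + (if 2 < n then (1:ℝ) else 0) with hc
    have hc0 : 0 ≤ c := by
      have h1 : (0:ℝ) ≤ if 2 < n then (1:ℝ) else 0 := by split <;> norm_num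
      have := Ff_nonneg n f 1
      rw [hc]; linarith
    set ε : ℝ := (c + 1)⁻¹ with hε
    have hεpos : 0 < ε := by rw [hε]; positivity
    have hcε : (c + 1) * ε = 1 := by rw [hε]; field_simp
    set g : ℕ → ℝ := fun m => if m = 0 then (1:ℝ) else if m = 1 then ε else 0 with hg
    refine of_window n f g {0, 1} (by intro m hm; simp at hm; rcases hm with h | h <;> omega)
      ?_ ?_
    · intro m _ hns
      simp at hns
      rw [hg]
      simp only [if_neg hns.1, if_neg hns.2]
    · rw [Finset.sum_insert (by simp), Finset.sum_singleton]
      have hg0 : g 0 = 1 := by simp [hg]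
      have hg1 : g 1 = ε := by simp [hg]
      have hg2 : g 2 = 0 := by simp [hg]
      have hq0 : qd n f g 0 = -ε := by
        unfold qd
        rw [hg0, Ff_eq n f 0 hn, hf0, if_neg (by omega), if_pos (by omega), hg1]
        unfold Dd
        rw [if_neg (by omega), if_pos (by omega)]
        norm_num
      have hq1 : qd n f g 1 = c * ε * ε - ε := by
        unfold qd
        rw [hg1, if_pos (by omega), show (1:ℕ) - 1 = 0 from rfl, hg0,
          show (1:ℕ) + 1 = 2 from rfl, hg2]
        unfold Dd
        rw [if_pos (by omega), show (1:ℕ) + 1 = 2 from rfl]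
        rw [hc]
        simp only [hg2, ite_self]
        ring
      rw [hq0, hq1]
      nlinarith
  · -- n = 1
    have hn1 : n = 1 := by omega
    subst hn1
    set g : ℕ → ℝ := fun m => if m = 0 then (1:ℝ) else 0 with hg
    refine of_window 1 f g {0} (by simp) ?_ ?_
    · intro m hm hns
      simp at hm hns
      omega
    · rw [Finset.sum_singleton]
      unfold qd Dd
      rw [Ff_eq 1 f 0 hn, hf0]
      norm_num [hg]

lemma caseB (n : ℕ) (hn : 0 < n) (f : Fin n → ℕ) (hfe : f ⟨n - 1, by have _h := 0; omega⟩ = 0) :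
    ∃ x : Fin n → ℝ, x ⬝ᵥ (Tm n f *ᵥ x) < x ⬝ᵥ x := by
  by_cases hn2 : 1 < n
  · set c : ℝ := Ff n f (n - 2) + (if 0 < n - 2 then (1:ℝ) else 0) with hc
    have hc0 : 0 ≤ c := by
      have h1 : (0:ℝ) ≤ if 0 < n - 2 then (1:ℝ) else 0 := by split <;> norm_num
      have := Ff_nonneg n f (n - 2)
      rw [hc]; linarith
    set ε : ℝ := (c + 1)⁻¹ with hε
    have hεpos : 0 < ε := by rw [hε]; positivity
    have hcε : (c + 1) * ε = 1 := by rw [hε]; field_simp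
    set g : ℕ → ℝ := fun m => if m = n - 2 then ε else if m = n - 1 then 1 else 0 with hg
    refine of_window n f g {n - 2, n - 1}
      (by intro m hm; simp only [Finset.mem_insert, Finset.mem_singleton] at hm
          rcases hm with h | h <;> omega) ?_ ?_
    · intro m _ hns
      simp only [Finset.mem_insert, Finset.mem_singleton, not_or] at hns
      rw [hg]
      simp only [if_neg hns.1, if_neg hns.2]
    · rw [Finset.sum_insert (by simp only [Finset.mem_singleton]; omega),
        Finset.sum_singleton]
      have hga : g (n - 2) = ε := by rw [hg]; simp
      have hgb : g (n - 1) = 1 := by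
        simp only [hg]; rw [if_neg (by omega : ¬ n - 1 = n - 2)]; simp
      have hq0 : qd n f g (n - 2) = c * ε * ε - ε := by
        unfold qd Dd
        rw [show n - 2 + 1 = n - 1 by omega, hga, hgb,
          if_pos (by omega : n - 1 < n)]
        have hgc : (if 0 < n - 2 then g (n - 2 - 1) else 0) = 0 := by
          by_cases h3 : 0 < n - 2
          · rw [if_pos h3, hg]
            simp only [if_neg (by omega : ¬ n - 2 - 1 = n - 2),
              if_neg (by omega : ¬ n - 2 - 1 = n - 1)]
          · rw [if_neg h3]
        rw [hgc, hc]
        ring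
      have hq1 : qd n f g (n - 1) = -ε := by
        unfold qd Dd
        rw [show n - 1 - 1 = n - 2 by omega, hga, hgb, Ff_eq n f (n - 1) (by omega), hfe,
          if_pos (by omega : 0 < n - 1), if_pos (by omega : 0 < n - 1),
          if_neg (by omega : ¬ n - 1 + 1 < n), if_neg (by omega : ¬ n - 1 + 1 < n)]
        norm_num
      rw [hq0, hq1]
      nlinarith
  · have hn1 : n = 1 := by omega
    subst hn1
    exact caseA 1 hn f hfe

lemma caseC (n : ℕ) (hn : 0 < n) (h2 : 1 < n) (f : Fin n → ℕ)
    (hf0 : f ⟨0, hn⟩ = 1) (hf1 : f ⟨1, h2⟩ = 0) :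
    ∃ x : Fin n → ℝ, x ⬝ᵥ (Tm n f *ᵥ x) < x ⬝ᵥ x := by
  by_cases hn3 : 2 < n
  · set c : ℝ := Ff n f 2 + (if 3 < n then (1:ℝ) else 0) with hc
    have hc0 : 0 ≤ c := by
      have h1 : (0:ℝ) ≤ if 3 < n then (1:ℝ) else 0 := by split <;> norm_num
      have := Ff_nonneg n f 2
      rw [hc]; linarith
    set ε : ℝ := (c + 1)⁻¹ with hε
    have hεpos : 0 < ε := by rw [hε]; positivity
    have hcε : (c + 1) * ε = 1 := by rw [hε]; field_simp
    set g : ℕ → ℝ := fun m => if m = 0 then (1:ℝ) else if m = 1 then 1 else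
      if m = 2 then ε else 0 with hg
    refine of_window n f g {0, 1, 2}
      (by intro m hm; simp only [Finset.mem_insert, Finset.mem_singleton] at hm
          rcases hm with h | h | h <;> omega) ?_ ?_
    · intro m _ hns
      simp only [Finset.mem_insert, Finset.mem_singleton, not_or] at hns
      rw [hg]
      simp only [if_neg hns.1, if_neg hns.2.1, if_neg hns.2.2]
    · rw [Finset.sum_insert (by simp), Finset.sum_insert (by simp), Finset.sum_singleton]
      have hg0 : g 0 = 1 := by simp [hg]
      have hg1 : g 1 = 1 := by simp [hg]
      have hg2 : g 2 = ε := by simp [hg]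
      have hg3 : g 3 = 0 := by simp [hg]
      have hq0 : qd n f g 0 = 0 := by
        unfold qd Dd
        rw [hg0, Ff_eq n f 0 hn, hf0]
        norm_num [hg1, show (1:ℕ) < n by omega]
      have hq1 : qd n f g 1 = -ε := by
        unfold qd Dd
        rw [hg1, Ff_eq n f 1 h2, hf1]
        norm_num [hg0, hg2, show (2:ℕ) < n by omega]
      have hq2 : qd n f g 2 = c * ε * ε - ε := by
        unfold qd Dd
        rw [hg2, show (2:ℕ) - 1 = 1 from rfl, show (2:ℕ) + 1 = 3 from rfl, hg1, hg3, hc]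
        simp only [ite_self]
        norm_num
        ring
      rw [hq0, hq1, hq2]
      nlinarith
  · have hn2 : n = 2 := by omega
    subst hn2
    set g : ℕ → ℝ := fun m => if m = 0 then (1:ℝ) else if m = 1 then 1 else 0 with hg
    refine of_window 2 f g {0, 1} (by intro m hm; simp at hm; rcases hm with h | h <;> omega)
      ?_ ?_
    · intro m _ hns
      simp only [Finset.mem_insert, Finset.mem_singleton, not_or] at hns
      rw [hg]
      simp only [if_neg hns.1, if_neg hns.2]
    · rw [Finset.sum_insert (by simp), Finset.sum_singleton]
      have hg0 : g 0 = 1 := by simp [hg]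
      have hg1 : g 1 = 1 := by simp [hg]
      have hq0 : qd 2 f g 0 = 0 := by
        unfold qd Dd
        rw [hg0, Ff_eq 2 f 0 hn, hf0]
        norm_num [hg1]
      have hq1 : qd 2 f g 1 = -1 := by
        unfold qd Dd
        rw [hg1, Ff_eq 2 f 1 h2, hf1]
        norm_num [hg0]
      rw [hq0, hq1]
      norm_num

lemma caseD (n : ℕ) (hn : 0 < n) (h2 : 1 < n) (f : Fin n → ℕ)
    (hfa : f ⟨n - 2, by have _h := 0; omega⟩ = 0) (hfb : f ⟨n - 1, by have _h := 0; omega⟩ = 1) :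
    ∃ x : Fin n → ℝ, x ⬝ᵥ (Tm n f *ᵥ x) < x ⬝ᵥ x := by
  by_cases hn3 : 2 < n
  · set c : ℝ := Ff n f (n - 3) + (if 0 < n - 3 then (1:ℝ) else 0) with hc
    have hc0 : 0 ≤ c := by
      have h1 : (0:ℝ) ≤ if 0 < n - 3 then (1:ℝ) else 0 := by split <;> norm_num
      have := Ff_nonneg n f (n - 3)
      rw [hc]; linarith
    set ε : ℝ := (c + 1)⁻¹ with hε
    have hεpos : 0 < ε := by rw [hε]; positivity
    have hcε : (c + 1) * ε = 1 := by rw [hε]; field_simp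
    set g : ℕ → ℝ := fun m => if m = n - 3 then ε else if m = n - 2 then 1 else
      if m = n - 1 then 1 else 0 with hg
    refine of_window n f g {n - 3, n - 2, n - 1}
      (by intro m hm; simp only [Finset.mem_insert, Finset.mem_singleton] at hm
          rcases hm with h | h | h <;> omega) ?_ ?_
    · intro m _ hns
      simp only [Finset.mem_insert, Finset.mem_singleton, not_or] at hns
      rw [hg]
      simp only [if_neg hns.1, if_neg hns.2.1, if_neg hns.2.2]
    · rw [Finset.sum_insert (by simp only [Finset.mem_insert, Finset.mem_singleton]; omega),
        Finset.sum_insert (by simp only [Finset.mem_singleton]; omega), Finset.sum_singleton]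
      have hga : g (n - 3) = ε := by simp [hg]
      have hgb : g (n - 2) = 1 := by
        simp only [hg]; rw [if_neg (by omega : ¬ n - 2 = n - 3)]; simp
      have hgc : g (n - 1) = 1 := by
        simp only [hg]; rw [if_neg (by omega : ¬ n - 1 = n - 3),
          if_neg (by omega : ¬ n - 1 = n - 2)]; simp
      have hq0 : qd n f g (n - 3) = c * ε * ε - ε := by
        unfold qd Dd
        rw [show n - 3 + 1 = n - 2 by omega, hga, hgb]
        simp only [if_pos (by omega : n - 2 < n)]
        have hgz : (if 0 < n - 3 then g (n - 3 - 1) else 0) = 0 := by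
          by_cases h3 : 0 < n - 3
          · rw [if_pos h3, hg]
            simp only [if_neg (by omega : ¬ n - 3 - 1 = n - 3),
              if_neg (by omega : ¬ n - 3 - 1 = n - 2), if_neg (by omega : ¬ n - 3 - 1 = n - 1)]
          · rw [if_neg h3]
        rw [hgz, hc]
        push_cast
        ring
      have hq1 : qd n f g (n - 2) = -ε := by
        unfold qd Dd
        rw [show n - 2 + 1 = n - 1 by omega, show n - 2 - 1 = n - 3 by omega, hga, hgb, hgc,
          Ff_eq n f (n - 2) (by omega), hfa]
        simp only [if_pos (by omega : 0 < n - 2), if_pos (by omega : n - 1 < n)]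
        push_cast
        ring
      have hq2 : qd n f g (n - 1) = 0 := by
        unfold qd Dd
        rw [show n - 1 - 1 = n - 2 by omega, hgb, hgc, Ff_eq n f (n - 1) (by omega), hfb]
        simp only [if_pos (by omega : 0 < n - 1), if_neg (by omega : ¬ n - 1 + 1 < n)]
        push_cast
        ring
      rw [hq0, hq1, hq2]
      nlinarith
  · -- n = 2 : then f ⟨0⟩ = 0, use caseA
    have hn2 : n = 2 := by omega
    subst hn2
    exact caseA 2 hn f hfa

lemma caseE (n : ℕ) (k : ℕ) (hk : k + 1 < n) (f : Fin n → ℕ)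
    (hfa : f ⟨k, by have _h := 0; omega⟩ = 0) (hfb : f ⟨k + 1, hk⟩ = 0) :
    ∃ x : Fin n → ℝ, x ⬝ᵥ (Tm n f *ᵥ x) < x ⬝ᵥ x := by
  have he' : (0:ℝ) ≤ (if 0 < k then (1:ℝ) else 0) ∧ (if 0 < k then (1:ℝ) else 0) ≤ 1 := by
    constructor <;> (split <;> norm_num)
  by_cases hk2 : k + 2 < n
  · set c : ℝ := Ff n f (k + 2) + (if k + 3 < n then (1:ℝ) else 0) with hc
    have hc0 : 0 ≤ c := by
      have h1 : (0:ℝ) ≤ if k + 3 < n then (1:ℝ) else 0 := by split <;> norm_num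
      have := Ff_nonneg n f (k + 2)
      rw [hc]; linarith
    set ε : ℝ := (c + 1)⁻¹ with hε
    have hεpos : 0 < ε := by rw [hε]; positivity
    have hcε : (c + 1) * ε = 1 := by rw [hε]; field_simp
    set g : ℕ → ℝ := fun m => if m = k then (1:ℝ) else if m = k + 1 then 1 else
      if m = k + 2 then ε else 0 with hg
    refine of_window n f g {k, k + 1, k + 2}
      (by intro m hm; simp only [Finset.mem_insert, Finset.mem_singleton] at hm
          rcases hm with h | h | h <;> omega) ?_ ?_
    · intro m _ hns
      simp only [Finset.mem_insert, Finset.mem_singleton, not_or] at hns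
      rw [hg]
      simp only [if_neg hns.1, if_neg hns.2.1, if_neg hns.2.2]
    · rw [Finset.sum_insert (by simp only [Finset.mem_insert, Finset.mem_singleton]; omega),
        Finset.sum_insert (by simp only [Finset.mem_singleton]; omega), Finset.sum_singleton]
      have hga : g k = 1 := by simp [hg]
      have hgb : g (k + 1) = 1 := by
        simp only [hg]; rw [if_neg (by omega : ¬ k + 1 = k)]; simp
      have hgc : g (k + 2) = ε := by
        simp only [hg]; rw [if_neg (by omega : ¬ k + 2 = k),
          if_neg (by omega : ¬ k + 2 = k + 1)]; simp
      have hgd : g (k + 3) = 0 := by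
        simp only [hg]; rw [if_neg (by omega : ¬ k + 3 = k),
          if_neg (by omega : ¬ k + 3 = k + 1), if_neg (by omega : ¬ k + 3 = k + 2)]
      have hq0 : qd n f g k = (if 0 < k then (1:ℝ) else 0) - 1 := by
        unfold qd Dd
        rw [hga, hgb, Ff_eq n f k (by omega), hfa]
        simp only [if_pos (by omega : k + 1 < n)]
        have hgz : (if 0 < k then g (k - 1) else 0) = 0 := by
          by_cases h3 : 0 < k
          · rw [if_pos h3, hg]
            simp only [if_neg (by omega : ¬ k - 1 = k), if_neg (by omega : ¬ k - 1 = k + 1),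
              if_neg (by omega : ¬ k - 1 = k + 2)]
          · rw [if_neg h3]
        rw [hgz]
        push_cast
        ring
      have hq1 : qd n f g (k + 1) = -ε := by
        unfold qd Dd
        rw [show k + 1 - 1 = k from rfl, show k + 1 + 1 = k + 2 from rfl, hga, hgb, hgc,
          Ff_eq n f (k + 1) hk, hfb]
        simp only [if_pos hk2]
        push_cast
        ring
      have hq2 : qd n f g (k + 2) = c * ε * ε - ε := by
        unfold qd Dd
        rw [show k + 2 - 1 = k + 1 from rfl, show k + 2 + 1 = k + 3 from rfl, hgb, hgc, hgd, hc]
        simp only [ite_self]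
        try simp only [if_pos (show 0 < k + 2 by omega)]
        push_cast
        ring
      rw [hq0, hq1, hq2]
      nlinarith
  · -- k + 2 = n
    set g : ℕ → ℝ := fun m => if m = k then (1:ℝ) else if m = k + 1 then 1 else 0 with hg
    refine of_window n f g {k, k + 1}
      (by intro m hm; simp only [Finset.mem_insert, Finset.mem_singleton] at hm
          rcases hm with h | h <;> omega) ?_ ?_
    · intro m _ hns
      simp only [Finset.mem_insert, Finset.mem_singleton, not_or] at hns
      rw [hg]
      simp only [if_neg hns.1, if_neg hns.2]
    · rw [Finset.sum_insert (by simp only [Finset.mem_singleton]; omega), Finset.sum_singleton]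
      have hga : g k = 1 := by simp [hg]
      have hgb : g (k + 1) = 1 := by
        simp only [hg]; rw [if_neg (by omega : ¬ k + 1 = k)]; simp
      have hq0 : qd n f g k = (if 0 < k then (1:ℝ) else 0) - 1 := by
        unfold qd Dd
        rw [hga, hgb, Ff_eq n f k (by omega), hfa]
        simp only [if_pos (by omega : k + 1 < n)]
        have hgz : (if 0 < k then g (k - 1) else 0) = 0 := by
          by_cases h3 : 0 < k
          · rw [if_pos h3, hg]
            simp only [if_neg (by omega : ¬ k - 1 = k), if_neg (by omega : ¬ k - 1 = k + 1)]
          · rw [if_neg h3]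
        rw [hgz]
        push_cast
        ring
      have hq1 : qd n f g (k + 1) = -1 := by
        unfold qd Dd
        rw [show k + 1 - 1 = k from rfl, hga, hgb, Ff_eq n f (k + 1) hk, hfb]
        simp only [if_neg (by omega : ¬ k + 1 + 1 < n)]
        push_cast
        ring
      rw [hq0, hq1]
      rcases he' with ⟨h1, h2⟩
      linarith

lemma caseF (n : ℕ) (k : ℕ) (hk : k + 2 < n) (f : Fin n → ℕ)
    (hfa : f ⟨k, by have _h := 0; omega⟩ = 1) (hfb : f ⟨k + 1, by have _h := 0; omega⟩ = 0) (hfc : f ⟨k + 2, hk⟩ = 1) :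
    ∃ x : Fin n → ℝ, x ⬝ᵥ (Tm n f *ᵥ x) < x ⬝ᵥ x := by
  have he' : (0:ℝ) ≤ (if 0 < k then (1:ℝ) else 0) ∧ (if 0 < k then (1:ℝ) else 0) ≤ 1 := by
    constructor <;> (split <;> norm_num)
  by_cases hk3 : k + 3 < n
  · set c : ℝ := Ff n f (k + 3) + (if k + 4 < n then (1:ℝ) else 0) with hc
    have hc0 : 0 ≤ c := by
      have h1 : (0:ℝ) ≤ if k + 4 < n then (1:ℝ) else 0 := by split <;> norm_num
      have := Ff_nonneg n f (k + 3)
      rw [hc]; linarith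
    set ε : ℝ := (c + 1)⁻¹ with hε
    have hεpos : 0 < ε := by rw [hε]; positivity
    have hcε : (c + 1) * ε = 1 := by rw [hε]; field_simp
    set g : ℕ → ℝ := fun m => if m = k then (1:ℝ) else if m = k + 1 then 2 else
      if m = k + 2 then 1 else if m = k + 3 then ε else 0 with hg
    refine of_window n f g {k, k + 1, k + 2, k + 3}
      (by intro m hm; simp only [Finset.mem_insert, Finset.mem_singleton] at hm
          rcases hm with h | h | h | h <;> omega) ?_ ?_
    · intro m _ hns
      simp only [Finset.mem_insert, Finset.mem_singleton, not_or] at hns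
      rw [hg]
      simp only [if_neg hns.1, if_neg hns.2.1, if_neg hns.2.2.1, if_neg hns.2.2.2]
    · rw [Finset.sum_insert (by simp only [Finset.mem_insert, Finset.mem_singleton]; omega),
        Finset.sum_insert (by simp only [Finset.mem_insert, Finset.mem_singleton]; omega),
        Finset.sum_insert (by simp only [Finset.mem_singleton]; omega), Finset.sum_singleton]
      have hga : g k = 1 := by simp [hg]
      have hgb : g (k + 1) = 2 := by
        simp only [hg]; rw [if_neg (by omega : ¬ k + 1 = k)]; simp
      have hgc : g (k + 2) = 1 := by
        simp only [hg]; rw [if_neg (by omega : ¬ k + 2 = k),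
          if_neg (by omega : ¬ k + 2 = k + 1)]; simp
      have hgd : g (k + 3) = ε := by
        simp only [hg]; rw [if_neg (by omega : ¬ k + 3 = k),
          if_neg (by omega : ¬ k + 3 = k + 1), if_neg (by omega : ¬ k + 3 = k + 2)]; simp
      have hge : g (k + 4) = 0 := by
        simp only [hg]; rw [if_neg (by omega : ¬ k + 4 = k),
          if_neg (by omega : ¬ k + 4 = k + 1), if_neg (by omega : ¬ k + 4 = k + 2),
          if_neg (by omega : ¬ k + 4 = k + 3)]
      have hq0 : qd n f g k = (if 0 < k then (1:ℝ) else 0) - 1 := by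
        unfold qd Dd
        rw [hga, hgb, Ff_eq n f k (by omega), hfa]
        simp only [if_pos (by omega : k + 1 < n)]
        have hgz : (if 0 < k then g (k - 1) else 0) = 0 := by
          by_cases h3 : 0 < k
          · rw [if_pos h3, hg]
            simp only [if_neg (by omega : ¬ k - 1 = k), if_neg (by omega : ¬ k - 1 = k + 1),
              if_neg (by omega : ¬ k - 1 = k + 2), if_neg (by omega : ¬ k - 1 = k + 3)]
          · rw [if_neg h3]
        rw [hgz]
        push_cast
        ring
      have hq1 : qd n f g (k + 1) = 0 := by
        unfold qd Dd
        rw [show k + 1 - 1 = k from rfl, show k + 1 + 1 = k + 2 from rfl, hga, hgb, hgc,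
          Ff_eq n f (k + 1) (by omega), hfb]
        simp only [if_pos (by omega : k + 2 < n)]
        try simp only [if_pos (show 0 < k + 1 by omega)]
        push_cast
        ring
      have hq2 : qd n f g (k + 2) = -ε := by
        unfold qd Dd
        rw [show k + 2 - 1 = k + 1 from rfl, show k + 2 + 1 = k + 3 from rfl, hgb, hgc, hgd,
          Ff_eq n f (k + 2) hk, hfc]
        simp only [if_pos hk3]
        try simp only [if_pos (show 0 < k + 2 by omega)]
        push_cast
        ring
      have hq3 : qd n f g (k + 3) = c * ε * ε - ε := by
        unfold qd Dd
        rw [show k + 3 - 1 = k + 2 from rfl, show k + 3 + 1 = k + 4 from rfl, hgc, hgd, hge, hc]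
        simp only [ite_self]
        try simp only [if_pos (show 0 < k + 3 by omega)]
        push_cast
        ring
      rw [hq0, hq1, hq2, hq3]
      rcases he' with ⟨h1, h2⟩
      nlinarith
  · -- k + 3 = n
    set g : ℕ → ℝ := fun m => if m = k then (1:ℝ) else if m = k + 1 then 2 else
      if m = k + 2 then 1 else 0 with hg
    refine of_window n f g {k, k + 1, k + 2}
      (by intro m hm; simp only [Finset.mem_insert, Finset.mem_singleton] at hm
          rcases hm with h | h | h <;> omega) ?_ ?_
    · intro m _ hns
      simp only [Finset.mem_insert, Finset.mem_singleton, not_or] at hns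
      rw [hg]
      simp only [if_neg hns.1, if_neg hns.2.1, if_neg hns.2.2]
    · rw [Finset.sum_insert (by simp only [Finset.mem_insert, Finset.mem_singleton]; omega),
        Finset.sum_insert (by simp only [Finset.mem_singleton]; omega), Finset.sum_singleton]
      have hga : g k = 1 := by simp [hg]
      have hgb : g (k + 1) = 2 := by
        simp only [hg]; rw [if_neg (by omega : ¬ k + 1 = k)]; simp
      have hgc : g (k + 2) = 1 := by
        simp only [hg]; rw [if_neg (by omega : ¬ k + 2 = k),
          if_neg (by omega : ¬ k + 2 = k + 1)]; simp
      have hq0 : qd n f g k = (if 0 < k then (1:ℝ) else 0) - 1 := by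
        unfold qd Dd
        rw [hga, hgb, Ff_eq n f k (by omega), hfa]
        simp only [if_pos (by omega : k + 1 < n)]
        have hgz : (if 0 < k then g (k - 1) else 0) = 0 := by
          by_cases h3 : 0 < k
          · rw [if_pos h3, hg]
            simp only [if_neg (by omega : ¬ k - 1 = k), if_neg (by omega : ¬ k - 1 = k + 1),
              if_neg (by omega : ¬ k - 1 = k + 2)]
          · rw [if_neg h3]
        rw [hgz]
        push_cast
        ring
      have hq1 : qd n f g (k + 1) = 0 := by
        unfold qd Dd
        rw [show k + 1 - 1 = k from rfl, show k + 1 + 1 = k + 2 from rfl, hga, hgb, hgc,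
          Ff_eq n f (k + 1) (by omega), hfb]
        simp only [if_pos (by omega : k + 2 < n)]
        try simp only [if_pos (show 0 < k + 1 by omega)]
        push_cast
        ring
      have hq2 : qd n f g (k + 2) = -1 := by
        unfold qd Dd
        rw [show k + 2 - 1 = k + 1 from rfl, hgb, hgc, Ff_eq n f (k + 2) hk, hfc]
        simp only [if_neg (by omega : ¬ k + 2 + 1 < n)]
        try simp only [if_pos (show 0 < k + 2 by omega)]
        push_cast
        ring
      rw [hq0, hq1, hq2]
      rcases he' with ⟨h1, h2⟩
      linarith

/-- If f satisfies one of the four boundary/zero-pattern conditions then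
λ₂(L_{CP^f}) < 1. -/
theorem stmt_6 (n : ℕ) (hn : 0 < n) (f : Fin n → ℕ)
    (hf :
      (f ⟨0, hn⟩ = 0 ∨ f ⟨n - 1, by omega⟩ = 0) ∨
      (∃ h : 2 ≤ n,
        (f ⟨0, hn⟩ = 1 ∧ f ⟨1, by omega⟩ = 0) ∨
        (f ⟨n - 2, by omega⟩ = 0 ∧ f ⟨n - 1, by omega⟩ = 1)) ∨
      (∃ k, ∃ h : k + 1 < n, f ⟨k, by omega⟩ = 0 ∧ f ⟨k + 1, h⟩ = 0) ∨
      (∃ k, ∃ h : k + 2 < n,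
        f ⟨k, by omega⟩ = 1 ∧ f ⟨k + 1, by omega⟩ = 0 ∧ f ⟨k + 2, h⟩ = 1)) :
    lamRe (lap (coneW (pathW n) (fun v => (f v : ℝ)))) 1 < 1 := by
  have key : ∃ x : Fin n → ℝ, x ⬝ᵥ (Tm n f *ᵥ x) < x ⬝ᵥ x := by
    rcases hf with (h | h) | ⟨h2, h | h⟩ | ⟨k, hk, h1a, h1b⟩ | ⟨k, hk, h1a, h1b, h1c⟩
    · exact caseA n hn f h
    · exact caseB n hn f h
    · exact caseC n hn (by omega) f h.1 h.2
    · exact caseD n hn (by omega) f h.1 h.2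
    · exact caseE n k hk f h1a h1b
    · exact caseF n k hk f h1a h1b h1c
  obtain ⟨x, hx⟩ := key
  exact lam2_lt_one n f x hx
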